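/- Let n ≥ p ≥ 1, α = √2/2, β = 1 − √2/2, and let φ : ℝ^{n×p} → ℝ be twice continuously differentiable. Let X ∈ ℝ^{n×p} satisfy XᵀX = I_p and set P_{uv}(X) = E_{uv} − α X E_{uv}ᵀ X − β X Xᵀ E_{uv}. Then ∑_{u=1}^{n} ∑_{v=1}^{p} D²φ(X)[P_{uv}(X), P_{uv}(X)] = ∑_{i=1}^{n} ∑_{j=1}^{p} ∂²_{ij}φ(X) − ∑_{i,u=1}^{n} ∑_{j,v=1}^{p} X_{iv} X_{uj} ∂_{ij}∂_{uv}φ(X), where D²φ(X)[·,·] is the second Fréchet derivative of φ at X and ∂_{ij} denotes the partial derivative with respect to the (i,j) matrix entry. -/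

import Mathlib

open Matrix

attribute [local instance] Matrix.normedAddCommGroup Matrix.normedSpace

/-- The projected field `P_{uv}(X) = E_{uv} - α X E_{uv}ᵀ X - β X Xᵀ E_{uv}` with
`α = √2/2`, `β = 1 - √2/2`. -/
noncomputable def projField {n p : ℕ} (X : Matrix (Fin n) (Fin p) ℝ)
    (u : Fin n) (v : Fin p) : Matrix (Fin n) (Fin p) ℝ :=
  Matrix.single u v (1 : ℝ)
    - (Real.sqrt 2 / 2) • (X * (Matrix.single u v (1 : ℝ))ᵀ * X)
    - (1 - Real.sqrt 2 / 2) • (X * Xᵀ * Matrix.single u v (1 : ℝ))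

/-!
Write `P_{uv}(X) = L(E_{uv})` with `L Z = Z - α T Z - β Q Z`, `T Z = X Zᵀ X`, `Q Z = X Xᵀ Z`.
The map `L` is symmetric for the Frobenius pairing, so for any bilinear form `B` (here `D²φ(X)`)
`∑ B (L E) (L E) = ∑ B (L² E) E` over the basis `E_{uv}`. From `XᵀX = 1` one gets `T² = Q`,
`Q² = Q` and `TQ = QT = T`, hence `L² = 1 - 2α(1 - β) T + (α² + β² - 2β) Q`, which for
`α = √2/2`, `β = 1 - α` is `1 - T`. The terms `B E E` and `B (T E) E` are the two sums on the
right-hand side.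
-/

section BilinearSum

variable {R M N ι : Type*} [CommSemiring R] [AddCommMonoid M] [Module R M]
  [AddCommMonoid N] [Module R N] [Fintype ι] [DecidableEq ι]

theorem Module.Basis.sum_apply_map_map_of_isSymm (B : M →ₗ[R] M →ₗ[R] N)
    (b : Module.Basis ι R M) (L : M →ₗ[R] M) (hL : (LinearMap.toMatrix b b L).IsSymm) :
    ∑ k, B (L (b k)) (L (b k)) = ∑ k, B (L (L (b k))) (b k) := by
  have hcol : ∀ a, ∑ k, b.repr (L (b k)) a • b k = L (b a) := by
    intro a
    conv_rhs => rw [← b.sum_repr (L (b a))]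
    refine Finset.sum_congr rfl fun k _ => ?_
    have hka := congrFun (congrFun hL k) a
    simp only [transpose_apply, LinearMap.toMatrix_apply] at hka
    rw [hka]
  calc ∑ k, B (L (b k)) (L (b k))
      = ∑ k, ∑ a, b.repr (L (b k)) a • B (L (b k)) (b a) := by
        refine Finset.sum_congr rfl fun k _ => ?_
        conv_lhs => enter [2]; rw [← b.sum_repr (L (b k))]
        simp only [map_sum, map_smul]
    _ = ∑ a, B (L (∑ k, b.repr (L (b k)) a • b k)) (b a) := by
        rw [Finset.sum_comm]
        simp only [map_sum, map_smul, LinearMap.sum_apply, LinearMap.smul_apply]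
    _ = ∑ k, B (L (L (b k))) (b k) := by simp only [hcol]

end BilinearSum

section MatrixEntries

variable {R N m n : Type*} [CommSemiring R] [Fintype m] [Fintype n] [DecidableEq m]
  [DecidableEq n]

theorem LinearMap.map_matrix_eq_sum_single [AddCommMonoid N] [Module R N]
    (f : Matrix m n R →ₗ[R] N) (A : Matrix m n R) :
    f A = ∑ i, ∑ j, A i j • f (Matrix.single i j 1) := by
  conv_lhs => rw [matrix_eq_sum_single A]
  simp only [map_sum, ← map_smul, smul_single, smul_eq_mul, mul_one]

theorem mul_transpose_single_one_mul_apply (X : Matrix m n R) (u i : m) (v j : n) :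
    (X * (single u v (1 : R))ᵀ * X) i j = X i v * X u j := by
  simp [mul_apply, single, ite_and]

theorem sum_apply_mul_transpose_single_mul_single (B : Matrix m n R →ₗ[R] Matrix m n R →ₗ[R] R)
    (X : Matrix m n R) :
    ∑ u, ∑ v, B (X * (single u v (1 : R))ᵀ * X) (single u v 1)
      = ∑ i, ∑ u, ∑ j, ∑ v, X i v * X u j * B (single i j 1) (single u v 1) := by
  have hexpand : ∀ u v, B (X * (single u v (1 : R))ᵀ * X) (single u v 1)
      = ∑ i, ∑ j, X i v * X u j * B (single i j 1) (single u v 1) := by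
    intro u v
    rw [LinearMap.map_matrix_eq_sum_single B (X * (single u v (1 : R))ᵀ * X)]
    simp only [LinearMap.sum_apply, LinearMap.smul_apply, mul_transpose_single_one_mul_apply,
      smul_eq_mul]
  simp only [hexpand]
  calc _ = ∑ u, ∑ i, ∑ v, ∑ j, X i v * X u j * B (single i j 1) (single u v 1) :=
        Finset.sum_congr rfl fun u _ => Finset.sum_comm
    _ = _ := by
      rw [Finset.sum_comm]
      exact Finset.sum_congr rfl fun i _ => Finset.sum_congr rfl fun u _ => Finset.sum_comm

end MatrixEntries

section ProjFieldLinearMap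

variable {m n : Type*} [Fintype m] [Fintype n]

noncomputable def projFieldLinearMap (X : Matrix m n ℝ) : Matrix m n ℝ →ₗ[ℝ] Matrix m n ℝ where
  toFun Z := Z - (√2 / 2) • (X * Zᵀ * X) - (1 - √2 / 2) • (X * Xᵀ * Z)
  map_add' Z W := by
    simp only [transpose_add, Matrix.mul_add, Matrix.add_mul]
    module
  map_smul' c Z := by
    simp only [transpose_smul, Matrix.mul_smul, Matrix.smul_mul, RingHom.id_apply]
    module

theorem projFieldLinearMap_apply (X Z : Matrix m n ℝ) :
    projFieldLinearMap X Z = Z - (√2 / 2) • (X * Zᵀ * X) - (1 - √2 / 2) • (X * Xᵀ * Z) :=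
  rfl

theorem projFieldLinearMap_projFieldLinearMap [DecidableEq n] {X : Matrix m n ℝ}
    (hX : Xᵀ * X = 1) (Z : Matrix m n ℝ) :
    projFieldLinearMap X (projFieldLinearMap X Z) = Z - X * Zᵀ * X := by
  have hα : (√2 / 2) ^ 2 = 1 / 2 := by rw [div_pow, Real.sq_sqrt zero_le_two]; norm_num
  have hX' : ∀ W : Matrix n n ℝ, Xᵀ * (X * W) = W := fun W => by
    rw [← Matrix.mul_assoc, hX, Matrix.one_mul]
  simp only [projFieldLinearMap_apply, transpose_sub, transpose_smul, transpose_mul,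
    transpose_transpose, Matrix.mul_sub, Matrix.sub_mul, Matrix.mul_smul, Matrix.smul_mul,
    Matrix.mul_assoc, hX, hX', Matrix.mul_one]
  linear_combination (norm := module)
    hα • ((2 : ℝ) • (X * (Xᵀ * Z) : Matrix m n ℝ) - (2 : ℝ) • (X * (Zᵀ * X) : Matrix m n ℝ))

variable [DecidableEq m] [DecidableEq n]

theorem projFieldLinearMap_single_apply_comm (X : Matrix m n ℝ) (u i : m) (v j : n) :
    projFieldLinearMap X (single u v 1) i j = projFieldLinearMap X (single i j 1) u v := by
  have hsymm : (X * Xᵀ) i u = (X * Xᵀ) u i := by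
    rw [← transpose_apply (X * Xᵀ), transpose_mul, transpose_transpose]
  simp only [projFieldLinearMap_apply, Matrix.sub_apply, Matrix.smul_apply,
    mul_transpose_single_one_mul_apply]
  by_cases hvj : v = j
  · subst hvj
    simp [single_apply, hsymm, eq_comm, mul_comm]
  · simp [hvj, Ne.symm hvj, mul_comm]

theorem isSymm_toMatrix_projFieldLinearMap (X : Matrix m n ℝ) :
    (LinearMap.toMatrix (stdBasis ℝ m n) (stdBasis ℝ m n) (projFieldLinearMap X)).IsSymm := by
  have hrepr : ∀ (A : Matrix m n ℝ) i j, (stdBasis ℝ m n).repr A (i, j) = A i j :=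
    fun _ _ _ => rfl
  ext ⟨i, j⟩ ⟨u, v⟩
  simp only [transpose_apply, LinearMap.toMatrix_apply, stdBasis_eq_single, hrepr]
  exact projFieldLinearMap_single_apply_comm X i u j v

end ProjFieldLinearMap

theorem projFieldLinearMap_single {n p : ℕ} (X : Matrix (Fin n) (Fin p) ℝ) (u : Fin n)
    (v : Fin p) : projFieldLinearMap X (single u v 1) = projField X u v :=
  rfl

theorem proj_field_second_order_general (n p : ℕ)
    (φ : Matrix (Fin n) (Fin p) ℝ → ℝ)
    (X : Matrix (Fin n) (Fin p) ℝ) (hX : Xᵀ * X = 1) :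
    ∑ u : Fin n, ∑ v : Fin p,
        iteratedFDeriv ℝ 2 φ X ![projField X u v, projField X u v]
      = (∑ i : Fin n, ∑ j : Fin p,
          iteratedFDeriv ℝ 2 φ X
            ![Matrix.single i j (1 : ℝ), Matrix.single i j (1 : ℝ)])
        - ∑ i : Fin n, ∑ u : Fin n, ∑ j : Fin p, ∑ v : Fin p,
            X i v * X u j * iteratedFDeriv ℝ 2 φ X
              ![Matrix.single i j (1 : ℝ), Matrix.single u v (1 : ℝ)] := by
  simp only [← bilinearIteratedFDerivTwo_eq_iteratedFDeriv]
  set B := bilinearIteratedFDerivTwo ℝ φ X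
  set b := stdBasis ℝ (Fin n) (Fin p)
  set L := projFieldLinearMap X
  calc ∑ u, ∑ v, B (projField X u v) (projField X u v)
      = ∑ k, B (L (b k)) (L (b k)) := by
        simp only [Fintype.sum_prod_type, b, stdBasis_eq_single, L, projFieldLinearMap_single]
    _ = ∑ k, B (L (L (b k))) (b k) :=
        b.sum_apply_map_map_of_isSymm B L (isSymm_toMatrix_projFieldLinearMap X)
    _ = _ := by
        simp only [L, projFieldLinearMap_projFieldLinearMap hX, map_sub, LinearMap.sub_apply,
          Finset.sum_sub_distrib, Fintype.sum_prod_type, b, stdBasis_eq_single,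
          sum_apply_mul_transpose_single_mul_single]

/-- the sum of second derivatives of `φ` along the projected fields equals
the second-order part of the extrinsic Laplace–Beltrami operator:
`∑_{u,v} D²φ(X)[P_{uv}(X), P_{uv}(X)] = ∑_{i,j} ∂²_{ij}φ(X) - ∑_{i,u,j,v} X_{iv} X_{uj} ∂_{ij}∂_{uv}φ(X)`. -/
theorem proj_field_second_order (n p : ℕ) (hp : 1 ≤ p) (hpn : p ≤ n)
    (φ : Matrix (Fin n) (Fin p) ℝ → ℝ) (hφ : ContDiff ℝ 2 φ)
    (X : Matrix (Fin n) (Fin p) ℝ) (hX : Xᵀ * X = 1) :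
    ∑ u : Fin n, ∑ v : Fin p,
        iteratedFDeriv ℝ 2 φ X ![projField X u v, projField X u v]
      = (∑ i : Fin n, ∑ j : Fin p,
          iteratedFDeriv ℝ 2 φ X
            ![Matrix.single i j (1 : ℝ), Matrix.single i j (1 : ℝ)])
        - ∑ i : Fin n, ∑ u : Fin n, ∑ j : Fin p, ∑ v : Fin p,
            X i v * X u j * iteratedFDeriv ℝ 2 φ X
              ![Matrix.single i j (1 : ℝ), Matrix.single u v (1 : ℝ)] :=
  proj_field_second_order_general n p φ X hX
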